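/- arXiv:2505.12849 — 2 statements merged into one kernel-verified Lean document; each statement's English description precedes it below -/
import Mathlib

section
/- For the affine causal system x_t = σ_t(x_{<t}) · z_t + u_t(x_{<t}) with x_1 = z_1, the Jacobi iteration x_t^{(k+1)} = σ_t(x^{(k)}_{<t}) · z_t + u_t(x^{(k)}_{<t}) converges to the exact solution after at most T - 1 iterations, i.e., x^{(T-1)} equals the unique solution x^* of the system, for any initial guess x^{(0)} with x^{(0)} 0 = z 0. -/
/-!
The Jacobi map `g` is causal: coordinate `t` of `g y` depends only on the coordinates of `y`
below `t`. Hence if an iterate agrees with the fixed point `xs` below index `n`, the next iterate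
agrees with it below `n + 1`. The hypotheses `σ 0 = 1`, `u 0 = 0` and `x⁽⁰⁾ 0 = z 0` make the
initial guess agree with `xs` at index `0`, so after `T - 1` steps all `T` coordinates agree.
-/

def IsCausal {T : ℕ} {α : Type*} (g : (Fin T → α) → Fin T → α) : Prop :=
  ∀ t : Fin T, ∀ x y : Fin T → α, (∀ i, i < t → x i = y i) → g x t = g y t

theorem IsCausal.iterate_eq_of_lt {T : ℕ} {α : Type*} {g : (Fin T → α) → Fin T → α}
    (hg : IsCausal g) {xs : Fin T → α} (hfix : g xs = xs) {x : ℕ → Fin T → α}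
    (hx : ∀ k, x (k + 1) = g (x k)) {m : ℕ} (h0 : ∀ t : Fin T, t.val < m → x 0 t = xs t) :
    ∀ k, ∀ t : Fin T, t.val < m + k → x k t = xs t := by
  intro k
  induction k with
  | zero => exact h0
  | succ k ih =>
    intro t ht
    have hagree : ∀ i, i < t → x k i = xs i := fun i hi => ih i (by omega)
    rw [hx, ← hfix]
    exact hg t _ _ hagree

theorem jacobi_affine_causal_converges_general
    (T : ℕ) (hT : 0 < T) (z : Fin T → ℝ)
    (σ u : Fin T → (Fin T → ℝ) → ℝ)
    (hσ : ∀ t : Fin T, ∀ x y : Fin T → ℝ, (∀ i : Fin T, i < t → x i = y i) → σ t x = σ t y)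
    (hu : ∀ t : Fin T, ∀ x y : Fin T → ℝ, (∀ i : Fin T, i < t → x i = y i) → u t x = u t y)
    (hσ0 : ∀ x : Fin T → ℝ, σ ⟨0, hT⟩ x = 1)
    (hu0 : ∀ x : Fin T → ℝ, u ⟨0, hT⟩ x = 0)
    (xs : Fin T → ℝ) (hxs : ∀ t : Fin T, xs t = σ t xs * z t + u t xs)
    (x : ℕ → Fin T → ℝ)
    (hx0 : x 0 ⟨0, hT⟩ = z ⟨0, hT⟩)
    (hx : ∀ k : ℕ, ∀ t : Fin T, x (k + 1) t = σ t (x k) * z t + u t (x k)) :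
    x (T - 1) = xs := by
  set g : (Fin T → ℝ) → Fin T → ℝ := fun y t => σ t y * z t + u t y
  have hcausal : IsCausal g := fun t x y h => by simp only [g, hσ t x y h, hu t x y h]
  have hfix : g xs = xs := funext fun t => (hxs t).symm
  have hstart : ∀ t : Fin T, t.val < 1 → x 0 t = xs t := by
    intro t ht
    obtain rfl : t = ⟨0, hT⟩ := Fin.ext (Nat.lt_one_iff.mp ht)
    rw [hx0, hxs, hσ0, hu0, one_mul, add_zero]
  funext t
  exact hcausal.iterate_eq_of_lt hfix (fun k => funext (hx k)) hstart (T - 1) t (by omega)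

/-- For the affine causal system `x t = σ t (x) * z t + u t (x)` with
`σ 0 = 1`, `u 0 = 0`, the Jacobi iteration converges to the exact solution after at
most `T - 1` iterations, for any initial guess whose first coordinate equals `z 0`. -/
theorem jacobi_affine_causal_converges
    (T : ℕ) (hT : 0 < T) (z : Fin T → ℝ)
    (σ u : Fin T → (Fin T → ℝ) → ℝ)
    (hσ : ∀ t : Fin T, ∀ x y : Fin T → ℝ, (∀ i : Fin T, i < t → x i = y i) → σ t x = σ t y)
    (hu : ∀ t : Fin T, ∀ x y : Fin T → ℝ, (∀ i : Fin T, i < t → x i = y i) → u t x = u t y)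
    (hσ0 : ∀ x : Fin T → ℝ, σ ⟨0, hT⟩ x = 1)
    (hu0 : ∀ x : Fin T → ℝ, u ⟨0, hT⟩ x = 0)
    (xs : Fin T → ℝ) (hxs : ∀ t : Fin T, xs t = σ t xs * z t + u t xs)
    (hxsuniq : ∀ y : Fin T → ℝ, (∀ t : Fin T, y t = σ t y * z t + u t y) → y = xs)
    (x : ℕ → Fin T → ℝ)
    (hx0 : x 0 ⟨0, hT⟩ = z ⟨0, hT⟩)
    (hx : ∀ k : ℕ, ∀ t : Fin T, x (k + 1) t = σ t (x k) * z t + u t (x k)) :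
    x (T - 1) = xs :=
  jacobi_affine_causal_converges_general T hT z σ u hσ hu hσ0 hu0 xs hxs x hx0 hx
end

section
/- Consider the block Gauss–Seidel–Jacobi scheme: partition Fin T into consecutive index intervals 𝒢_1 < 𝒢_2 < … < 𝒢_G, and solve the strictly causal fixed-point system x = g(x) by solving each block in turn, running the Jacobi iteration within block g for |𝒢_g| iterations while keeping the previously solved blocks fixed at their exact values. Then the scheme produces the exact solution x^* of the full system after running all G blocks. -/
/-! Strict causality means that `g x` is correct at index `t` as soon as `x` is correct below `t`.
So if the iterate is already exact below the start `lo` of a block `[lo, hi)`, each Jacobi sweep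
over the block extends the exact prefix by one index, and `hi - lo` sweeps make it exact below `hi`.
Carrying this from block to block gives exactness below `b G = T`. -/

open Set

namespace BlockJacobi

variable {T : ℕ} {α : Type*}

def IsStrictlyCausal (g : (Fin T → α) → Fin T → α) : Prop :=
  ∀ x y : Fin T → α, ∀ t : Fin T, (∀ i : Fin T, i < t → x i = y i) → g x t = g y t

def sweep (g : (Fin T → α) → Fin T → α) (lo hi : ℕ) (x : Fin T → α) : Fin T → α :=
  fun t => if lo ≤ (t : ℕ) ∧ (t : ℕ) < hi then g x t else x t

def below (T n : ℕ) : Set (Fin T) := {t | (t : ℕ) < n}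

variable {g : (Fin T → α) → Fin T → α} {xs : Fin T → α} {lo hi : ℕ}

theorem eqOn_sweep (hg : IsStrictlyCausal g) (hxs : g xs = xs) {x : Fin T → α} {k : ℕ}
    (hx : EqOn x xs (below T (min (lo + k) hi))) :
    EqOn (sweep g lo hi x) xs (below T (min (lo + k + 1) hi)) := by
  intro t ht
  simp only [below, mem_ofPred_eq, lt_min_iff] at hx ht
  by_cases hlo : lo ≤ (t : ℕ)
  · have hprefix : ∀ i : Fin T, i < t → x i = xs i := fun i hi' =>
      hx (show (i : ℕ) < lo + k ∧ (i : ℕ) < hi by have : (i : ℕ) < t := hi'; omega)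
    simp only [sweep, if_pos (And.intro hlo ht.2)]
    rw [hg x xs t hprefix, hxs]
  · simp only [sweep, if_neg (fun h : lo ≤ (t : ℕ) ∧ (t : ℕ) < hi => hlo h.1)]
    exact hx ⟨by omega, ht.2⟩

theorem eqOn_of_sweep_recurrence (hg : IsStrictlyCausal g) (hxs : g xs = xs)
    {z : ℕ → Fin T → α} (hz : ∀ k, z (k + 1) = sweep g lo hi (z k))
    (h0 : EqOn (z 0) xs (below T lo)) (k : ℕ) :
    EqOn (z k) xs (below T (min (lo + k) hi)) := by
  induction k with
  | zero => exact h0.mono fun t ht => by simp only [below, mem_ofPred_eq] at ht ⊢; omega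
  | succ k ih => rw [hz]; exact eqOn_sweep hg hxs ih

theorem eqOn_below_hi_of_sweep_recurrence (hg : IsStrictlyCausal g) (hxs : g xs = xs)
    {z : ℕ → Fin T → α} (hz : ∀ k, z (k + 1) = sweep g lo hi (z k))
    (h0 : EqOn (z 0) xs (below T lo)) :
    EqOn (z (hi - lo)) xs (below T hi) := by
  have h := eqOn_of_sweep_recurrence hg hxs hz h0 (hi - lo)
  rwa [show min (lo + (hi - lo)) hi = hi by omega] at h

end BlockJacobi

open BlockJacobi

theorem block_gauss_seidel_jacobi_exact_general
    (T G : ℕ)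
    (g : (Fin T → ℝ) → (Fin T → ℝ))
    (hcausal : ∀ x y : Fin T → ℝ, ∀ t : Fin T,
      (∀ i : Fin T, i < t → x i = y i) → g x t = g y t)
    (xs : Fin T → ℝ) (hxs : g xs = xs)
    (b : ℕ → ℕ) (hb0 : b 0 = 0) (hbG : b G = T)
    (y : ℕ → ℕ → Fin T → ℝ)
    (hstep : ∀ m k : ℕ, ∀ t : Fin T,
      y m (k + 1) t = if b m ≤ (t : ℕ) ∧ (t : ℕ) < b (m + 1) then g (y m k) t else y m k t)
    (hcarry : ∀ m : ℕ, y (m + 1) 0 = y m (b (m + 1) - b m)) :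
    y G 0 = xs := by
  have hblock : ∀ m, EqOn (y m 0) xs (below T (b m)) := by
    intro m
    induction m with
    | zero => simp [below, hb0]
    | succ m ih =>
      rw [hcarry]
      exact eqOn_below_hi_of_sweep_recurrence hcausal hxs (fun k => funext (hstep m k)) ih
  funext t
  exact hblock G (show (t : ℕ) < b G by rw [hbG]; exact t.isLt)

/-- The block Gauss–Seidel–Jacobi scheme over a consecutive partition
of `Fin T` with block boundaries `b 0 = 0 ≤ b 1 ≤ … ≤ b G = T`, running the Jacobi
iteration within block `m` for `b (m+1) - b m` iterations (updating only indices in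
`[b m, b (m+1))` and carrying the result to the next block), produces the exact
fixed point `xs` of the strictly causal system after running all `G` blocks. -/
theorem block_gauss_seidel_jacobi_exact
    (T G : ℕ)
    (g : (Fin T → ℝ) → (Fin T → ℝ))
    (hcausal : ∀ x y : Fin T → ℝ, ∀ t : Fin T,
      (∀ i : Fin T, i < t → x i = y i) → g x t = g y t)
    (xs : Fin T → ℝ) (hxs : g xs = xs)
    (b : ℕ → ℕ) (hb0 : b 0 = 0) (hbmono : Monotone b) (hbG : b G = T)
    (y : ℕ → ℕ → Fin T → ℝ)
    (hstep : ∀ m k : ℕ, ∀ t : Fin T,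
      y m (k + 1) t = if b m ≤ (t : ℕ) ∧ (t : ℕ) < b (m + 1) then g (y m k) t else y m k t)
    (hcarry : ∀ m : ℕ, y (m + 1) 0 = y m (b (m + 1) - b m)) :
    y G 0 = xs :=
  block_gauss_seidel_jacobi_exact_general T G g hcausal xs hxs b hb0 hbG y hstep hcarry
end
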